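/- For all positive integers a and b with gcd(a,b) = 1, the product {a}!·{b}!·{a+b} divides {a+b}! in Z[s,t]; that is, the Lucas analogue of the rational Catalan number, Cat{a,b} = (1/{a+b})·{a+b choose a}_L, is a polynomial in s and t (with integer coefficients). -/

import Mathlib

/-!
The Lucas polynomials satisfy the addition formula `{m+n+1} = {m+1}{n+1} + t{m}{n}`. By induction
on `j + k` it shows that Lucasnomials are polynomials, so
`X = {a+b-1}!/({a}!{b-1}!)` and `Y = {a+b-1}!/({a-1}!{b}!)` lie in `ℤ[s,t]`; they satisfy
`{a} X = {b} Y`. Since `{n}` evaluates to `1` at `s = 1, t = 0` for `n ≥ 1`, it is coprime to the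
prime `t`, and the addition formula then runs the Euclidean algorithm on indices: `{a}` and `{b}`
are coprime when `a` and `b` are. Hence `{b} ∣ X`, and `{a+b}! = {a+b} X {a}! {b-1}!` is divisible
by `{a}! {b}! {a+b}`.
-/

open MvPolynomial Finset

noncomputable section

/-- Polynomial ring ℤ[s,t] with s = X 0, t = X 1. -/
abbrev P2 : Type := MvPolynomial (Fin 2) ℤ

def ps : P2 := X 0
def pt : P2 := X 1

/-- The Lucas sequence of polynomials: {0}=0, {1}=1, {n}=s{n-1}+t{n-2}. -/
def lucas : ℕ → P2
  | 0 => 0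
  | 1 => 1
  | (n+2) => ps * lucas (n+1) + pt * lucas n

/-- The Lucastorial {n}! = {1}{2}⋯{n}. -/
def lucasFact (n : ℕ) : P2 := ∏ i ∈ Finset.range n, lucas (i+1)

/-- The d-divisible Lucastorial {n:d}! = {d}{2d}⋯{nd}. -/
def lucasFactD (d n : ℕ) : P2 := ∏ i ∈ Finset.range n, lucas (d*(i+1))

/-- A polynomial lies in ℕ[s,t]: all coefficients are nonnegative. -/
def Nonneg (p : P2) : Prop := ∀ m, 0 ≤ p.coeff m

/-- The fraction field ℤ(s,t). -/
abbrev K : Type := FractionRing P2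

def φ : P2 →+* K := algebraMap P2 K

def L (n : ℕ) : K := φ (lucas n)

def LFact (n : ℕ) : K := φ (lucasFact n)

def LFactD (d n : ℕ) : K := φ (lucasFactD d n)

/-- The Lucasnomial {n choose k}, as an element of the fraction field. -/
def lnom (n k : ℕ) : K := LFact n / (LFact k * LFact (n-k))

/-- The d-divisible Lucasnomial {n:d choose k:d}, as an element of the fraction field. -/
def lnomD (d n k : ℕ) : K := LFactD d n / (LFactD d k * LFactD d (n-k))

/-- The Lucas-Catalan number C_{n} = (1/{n+1}) {2n choose n}. -/
def catL (n : ℕ) : K := lnom (2*n) n / L (n+1)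

/-- The Lucas-Fuss-Catalan number C_{n,k} = (1/{kn+1}) {(k+1)n choose n}. -/
def fussCatL (n k : ℕ) : K := lnom ((k+1)*n) n / L (k*n+1)


lemma lucas_add_two (n : ℕ) : lucas (n + 2) = ps * lucas (n + 1) + pt * lucas n := rfl

lemma lucasFact_succ (n : ℕ) : lucasFact (n + 1) = lucasFact n * lucas (n + 1) :=
  prod_range_succ _ n

lemma lucas_add (m n : ℕ) :
    lucas (m + n + 1) = lucas (m + 1) * lucas (n + 1) + pt * lucas m * lucas n := by
  induction m using Nat.twoStepInduction generalizing n with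
  | zero => simp [lucas]
  | one => rw [add_right_comm, lucas_add_two]; simp [lucas, add_comm]
  | more m ih₀ ih₁ =>
    rw [show m + 2 + n + 1 = m + n + 1 + 2 by omega, lucas_add_two,
      show m + n + 1 + 1 = m + 1 + n + 1 by omega, ih₁ n, ih₀ n,
      show m + 2 + 1 = m + 1 + 2 by omega, lucas_add_two (m + 1),
      show m + 1 + 1 = m + 2 from rfl, lucas_add_two m]
    ring

lemma eval_lucas_succ (n : ℕ) : eval ![1, 0] (lucas (n + 1)) = 1 := by
  induction n using Nat.twoStepInduction with
  | zero => simp [lucas]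
  | one => simp [lucas, ps, pt]
  | more n _ ih => rw [lucas_add_two]; simp [ih, ps, pt]

lemma lucasFact_ne_zero (n : ℕ) : lucasFact n ≠ 0 := by
  have h : eval ![1, 0] (lucasFact n) = 1 := by
    simp only [lucasFact, map_prod, eval_lucas_succ, prod_const_one]
  rintro h₀
  simp [h₀] at h

lemma isRelPrime_pt_lucas_succ (n : ℕ) : IsRelPrime pt (lucas (n + 1)) := by
  refine (X_prime.irreducible.isRelPrime_iff_not_dvd).2 fun ⟨c, hc⟩ => ?_
  simpa [hc] using eval_lucas_succ n

lemma isRelPrime_lucas_lucas_succ (n : ℕ) : IsRelPrime (lucas n) (lucas (n + 1)) := by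
  induction n with
  | zero => exact isRelPrime_one_right
  | succ n ih =>
    intro d hd₁ hd₂
    have hdt : d ∣ pt * lucas n := by
      rw [show pt * lucas n = lucas (n + 2) - ps * lucas (n + 1) by rw [lucas_add_two]; ring]
      exact dvd_sub hd₂ (dvd_mul_of_dvd_right hd₁ ps)
    have hd : IsRelPrime d pt := (isRelPrime_pt_lucas_succ n).symm.of_dvd_left hd₁
    exact ih (hd.dvd_of_dvd_mul_left hdt) hd₁

lemma IsRelPrime.lucas_add {k n : ℕ} (h : IsRelPrime (lucas k) (lucas n)) :
    IsRelPrime (lucas (k + n)) (lucas n) := by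
  rcases n with _ | n
  · exact h
  intro d hd₁ hd₂
  have hdt : d ∣ pt * (lucas k * lucas n) := by
    rw [show pt * (lucas k * lucas n) = lucas (k + n + 1) - lucas (k + 1) * lucas (n + 1) by
      rw [_root_.lucas_add]; ring]
    exact dvd_sub hd₁ (dvd_mul_of_dvd_right hd₂ _)
  have hd : IsRelPrime d pt := (isRelPrime_pt_lucas_succ n).symm.of_dvd_left hd₂
  have hd' : IsRelPrime d (lucas n) := (isRelPrime_lucas_lucas_succ n).symm.of_dvd_left hd₂
  exact h (hd'.dvd_of_dvd_mul_right (hd.dvd_of_dvd_mul_left hdt)) hd₂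

lemma IsRelPrime.lucas_add_mul {k n : ℕ} (h : IsRelPrime (lucas k) (lucas n)) (q : ℕ) :
    IsRelPrime (lucas (k + n * q)) (lucas n) := by
  induction q with
  | zero => simpa using h
  | succ q ih => simpa only [mul_add_one, ← add_assoc] using ih.lucas_add

lemma isRelPrime_lucas_of_coprime {m n : ℕ} (h : Nat.Coprime m n) :
    IsRelPrime (lucas m) (lucas n) := by
  induction m, n using Nat.gcd.induction with
  | H0 n =>
    obtain rfl : n = 1 := by simpa using h
    exact isRelPrime_one_right
  | H1 m n _ ih =>
    have := (ih (by rwa [Nat.Coprime, ← Nat.gcd_rec])).lucas_add_mul (n / m)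
    rw [Nat.mod_add_div] at this
    exact this.symm

lemma lucasFact_mul_dvd (j k : ℕ) : lucasFact j * lucasFact k ∣ lucasFact (j + k) := by
  obtain ⟨n, hn⟩ : ∃ n, j + k = n := ⟨_, rfl⟩
  induction n generalizing j k with
  | zero =>
    obtain ⟨rfl, rfl⟩ : j = 0 ∧ k = 0 := by omega
    simp [lucasFact]
  | succ n ih =>
    rcases j with _ | j
    · simp [lucasFact]
    rcases k with _ | k
    · simp [lucasFact]
    rw [show j + 1 + (k + 1) = j + (k + 1) + 1 by omega, lucasFact_succ (j + (k + 1)),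
      show j + (k + 1) + 1 = k + 1 + j + 1 by omega, lucas_add, mul_add]
    apply dvd_add
    · rw [lucasFact_succ j, mul_right_comm]
      exact mul_dvd_mul (ih j (k + 1) (by omega)) (dvd_mul_left _ _)
    · rw [lucasFact_succ k, ← mul_assoc, show j + (k + 1) = j + 1 + k by omega]
      exact mul_dvd_mul (ih (j + 1) k (by omega)) (dvd_mul_of_dvd_left (dvd_mul_left _ _) _)

lemma lucasFact_succ_mul_dvd_of_isRelPrime {a b : ℕ}
    (h : IsRelPrime (lucas (a + 1)) (lucas (b + 1))) :
    lucasFact (a + 1) * lucasFact (b + 1) ∣ lucasFact (a + b + 1) := by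
  obtain ⟨X, hX⟩ := lucasFact_mul_dvd (a + 1) b
  obtain ⟨Y, hY⟩ := lucasFact_mul_dvd a (b + 1)
  rw [lucasFact_succ] at hX hY
  rw [show a + (b + 1) = a + 1 + b by omega] at hY
  have hXY : lucas (a + 1) * X = lucas (b + 1) * Y :=
    mul_left_cancel₀ (mul_ne_zero (lucasFact_ne_zero a) (lucasFact_ne_zero b)) <| by
      linear_combination hY - hX
  obtain ⟨Z, rfl⟩ : lucas (b + 1) ∣ X := h.symm.dvd_of_dvd_mul_left ⟨Y, hXY⟩
  exact ⟨Z, by rw [lucasFact_succ a, lucasFact_succ b, ← add_right_comm, hX]; ring⟩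

/-- for positive coprime a, b, {a}!{b}!{a+b} divides {a+b}!,
i.e. the Lucas rational Catalan analogue Cat{a,b} is a polynomial in ℤ[s,t]. -/
theorem rationalCatalan_polynomial (a b : ℕ) (ha : 0 < a) (hb : 0 < b)
    (hab : Nat.gcd a b = 1) :
    ∃ p : P2, lucasFact (a+b) = p * (lucasFact a * lucasFact b * lucas (a+b)) := by
  obtain ⟨a, rfl⟩ : ∃ a', a = a' + 1 := ⟨a - 1, by omega⟩
  obtain ⟨b, rfl⟩ : ∃ b', b = b' + 1 := ⟨b - 1, by omega⟩
  obtain ⟨p, hp⟩ := lucasFact_succ_mul_dvd_of_isRelPrime (isRelPrime_lucas_of_coprime hab)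
  refine ⟨p, ?_⟩
  rw [show a + 1 + (b + 1) = a + b + 1 + 1 by omega, lucasFact_succ, hp]
  ring
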